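/- arXiv:2005.00051 — 2 statements merged into one kernel-verified Lean document; each statement's English description precedes it below -/
import Mathlib

section
/- For every natural number d and reals K, c ≥ 1, sqrt(p_{Kc}(d)) ≤ e^{Kc/2} · sqrt(Kc) · p_{Kc}(floor(d/2)), where p_λ(d) = e^{-λ} λ^d / d! is the Poisson pmf with parameter λ. -/
/-! Squaring both sides, the claim reads `p_λ(d) ≤ e^{-λ} λ^{2⌊d/2⌋+1} / (⌊d/2⌋!)²`, which follows
from `λ^d ≤ λ^{2⌊d/2⌋+1}` for `λ ≥ 1` and `(⌊d/2⌋!)² ≤ d!`. -/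

open Real Nat

theorem Nat.factorial_div_two_sq_le (d : ℕ) : (d / 2)! ^ 2 ≤ d ! :=
  calc (d / 2)! ^ 2 = (d / 2)! * (d / 2)! := sq _
    _ ≤ (d / 2 + d / 2)! :=
      Nat.le_of_dvd (Nat.factorial_pos _) (Nat.factorial_mul_factorial_dvd_factorial_add _ _)
    _ ≤ d ! := Nat.factorial_le (by omega)

theorem pow_le_mul_sq_pow_div_two {x : ℝ} (hx : 1 ≤ x) (d : ℕ) :
    x ^ d ≤ x * (x ^ (d / 2)) ^ 2 :=
  calc x ^ d ≤ x ^ (2 * (d / 2) + 1) := pow_le_pow_right₀ hx (by omega)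
    _ = x * (x ^ (d / 2)) ^ 2 := by ring

theorem exp_half_mul_sqrt_mul_exp_neg_sq {x : ℝ} (hx : 0 ≤ x) (y : ℝ) :
    (exp (x / 2) * √x * (exp (-x) * y)) ^ 2 = exp (-x) * (x * y ^ 2) := by
  have hexp : exp (x / 2) ^ 2 * exp (-x) = 1 := by
    rw [← exp_nat_mul, ← exp_add, ← exp_zero]
    ring_nf
  calc (exp (x / 2) * √x * (exp (-x) * y)) ^ 2
      = (exp (x / 2) ^ 2 * exp (-x)) * exp (-x) * (√x ^ 2 * y ^ 2) := by ring
    _ = exp (-x) * (x * y ^ 2) := by rw [hexp, sq_sqrt hx]; ring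

theorem poisson_pmf_le_sq {l : ℝ} (hl : 1 ≤ l) (d : ℕ) :
    exp (-l) * l ^ d / d ! ≤ (exp (l / 2) * √l * (exp (-l) * l ^ (d / 2) / (d / 2)!)) ^ 2 := by
  have hfac : ((d / 2)! : ℝ) ^ 2 ≤ d ! := by exact_mod_cast Nat.factorial_div_two_sq_le d
  rw [mul_div_assoc (exp (-l)) (l ^ (d / 2)), exp_half_mul_sqrt_mul_exp_neg_sq (by linarith),
    div_pow, ← mul_div_assoc, ← mul_div_assoc]
  gcongr
  exact pow_le_mul_sq_pow_div_two hl d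

theorem sqrt_poisson_pmf_le (d : ℕ) (K c : ℝ) (hK : 1 ≤ K) (hc : 1 ≤ c) :
    Real.sqrt (Real.exp (-(K * c)) * (K * c) ^ d / (Nat.factorial d)) ≤
      Real.exp (K * c / 2) * Real.sqrt (K * c) *
        (Real.exp (-(K * c)) * (K * c) ^ (d / 2) / (Nat.factorial (d / 2))) := by
  exact Real.sqrt_le_iff.mpr
    ⟨by positivity, poisson_pmf_le_sq (one_le_mul_of_one_le_of_one_le hK hc) d⟩
end

section
/- For the d-multi-draw channel capacity C_d = 1 + Σ_{i=0}^d B_{d,p}(i) log₂(B_{d,p}(i)/(B_{d,p}(i)+B_{d,p}(d-i))) with B_{d,p}(i) = C(d,i)p^i(1-p)^{d-i} and fixed p ∈ (0, 1/2), C_d → 1 as d → ∞. -/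
/-- Binomial pmf with `d` trials and success probability `p`. -/
noncomputable def binomPmf (d : ℕ) (p : ℝ) (i : ℕ) : ℝ :=
  (d.choose i : ℝ) * p ^ i * (1 - p) ^ (d - i)

/-- Capacity of the `d`-multi-draw channel with crossover probability `p`. -/
noncomputable def multiDrawCapacity (p : ℝ) (d : ℕ) : ℝ :=
  1 + ∑ i ∈ Finset.range (d + 1),
    binomPmf d p i * Real.logb 2 (binomPmf d p i / (binomPmf d p i + binomPmf d p (d - i)))

private lemma aux_sqrt_pow (x : ℝ) (hx : 0 ≤ x) : ∀ n : ℕ, Real.sqrt (x ^ n) = Real.sqrt x ^ n := by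
  intro n
  induction n with
  | zero => simp
  | succ n ih => rw [pow_succ, pow_succ, ← ih, ← Real.sqrt_mul (pow_nonneg hx n), mul_comm (x^n) x,
      Real.sqrt_mul hx, mul_comm]

private lemma aux_log_one_add_le (x : ℝ) (hx : 0 ≤ x) :
    Real.log (1 + x) ≤ 2 * Real.sqrt x := by
  have h1 : (0:ℝ) ≤ 1 + x := by linarith
  have hs : Real.sqrt (1 + x) ≤ 1 + Real.sqrt x := by
    have : 1 + x ≤ (1 + Real.sqrt x) ^ 2 := by
      have hsx : 0 ≤ Real.sqrt x := Real.sqrt_nonneg x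
      have hxx : Real.sqrt x ^ 2 = x := Real.sq_sqrt hx
      nlinarith
    calc Real.sqrt (1 + x) ≤ Real.sqrt ((1 + Real.sqrt x) ^ 2) := Real.sqrt_le_sqrt this
      _ = 1 + Real.sqrt x := Real.sqrt_sq (by positivity)
  have hpos : 0 < Real.sqrt (1 + x) := Real.sqrt_pos.mpr (by linarith)
  have := Real.log_le_sub_one_of_pos hpos
  have hlog : Real.log (1 + x) = 2 * Real.log (Real.sqrt (1 + x)) := by
    rw [Real.log_sqrt h1]; ring
  rw [hlog]
  nlinarith

private lemma aux_binom_pos {d i : ℕ} {p : ℝ} (hp0 : 0 < p) (hp1 : p < 1) :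
    0 < binomPmf d p i ∨ d < i := by
  rcases le_or_gt i d with h | h
  · left
    have hc : 0 < (d.choose i : ℝ) := by
      exact_mod_cast Nat.choose_pos h
    have h1p : (0:ℝ) < 1 - p := by linarith
    unfold binomPmf
    positivity
  · right; exact h

theorem multiDrawCapacity_tendsto_one (p : ℝ) (hp0 : 0 < p) (hp : p < 1 / 2) :
    Filter.Tendsto (fun d : ℕ => multiDrawCapacity p d) Filter.atTop (nhds 1) := by
  have hp1 : (0:ℝ) < 1 - p := by linarith
  have hplt1 : p < 1 := by linarith
  set q : ℝ := 2 * Real.sqrt (p * (1 - p)) with hq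
  have hq0 : 0 ≤ q := by positivity
  have hq1 : q < 1 := by
    have h4 : 4 * (p * (1 - p)) < 1 := by nlinarith [sq_nonneg (1 - 2*p)]
    have : q ^ 2 < 1 := by
      have hsq : Real.sqrt (p * (1-p)) ^ 2 = p * (1-p) := Real.sq_sqrt (by positivity)
      nlinarith
    nlinarith
  -- key bound on the sum
  have key : ∀ d : ℕ,
      ‖∑ i ∈ Finset.range (d + 1),
        binomPmf d p i * Real.logb 2 (binomPmf d p i / (binomPmf d p i + binomPmf d p (d - i)))‖
      ≤ (2 / Real.log 2) * q ^ d := by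
    intro d
    have hlog2 : (0:ℝ) < Real.log 2 := Real.log_pos (by norm_num)
    have termbound : ∀ i ∈ Finset.range (d + 1),
        ‖binomPmf d p i * Real.logb 2 (binomPmf d p i / (binomPmf d p i + binomPmf d p (d - i)))‖
        ≤ (2 / Real.log 2) * ((d.choose i : ℝ) * (Real.sqrt (p * (1 - p))) ^ d) := by
      intro i hi
      rw [Finset.mem_range] at hi
      have hid : i ≤ d := Nat.lt_succ_iff.mp hi
      have hBi : 0 < binomPmf d p i := by
        rcases aux_binom_pos (d := d) (i := i) hp0 hplt1 with h | h
        · exact h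
        · omega
      have hBdi : 0 < binomPmf d p (d - i) := by
        rcases aux_binom_pos (d := d) (i := d - i) hp0 hplt1 with h | h
        · exact h
        · omega
      set a := binomPmf d p i
      set b := binomPmf d p (d - i)
      have hab : 0 < a + b := by linarith
      have hratio : a / (a + b) = (1 + b / a)⁻¹ := by
        field_simp
      have hlogb : Real.logb 2 (a / (a + b)) = - (Real.log (1 + b / a) / Real.log 2) := by
        rw [hratio, Real.logb, Real.log_inv]; ring
      have hba : 0 ≤ b / a := by positivity
      have hlb : Real.log (1 + b / a) ≤ 2 * Real.sqrt (b / a) := aux_log_one_add_le _ hba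
      have hlb0 : 0 ≤ Real.log (1 + b / a) := Real.log_nonneg (by linarith)
      have hnorm : ‖a * Real.logb 2 (a / (a + b))‖ = a * (Real.log (1 + b / a) / Real.log 2) := by
        rw [hlogb, mul_neg, norm_neg, Real.norm_eq_abs, abs_of_nonneg]
        positivity
      rw [hnorm]
      have hsab : a * Real.sqrt (b / a) = Real.sqrt (a * b) := by
        nth_rewrite 1 [← Real.sqrt_sq hBi.le]
        rw [← Real.sqrt_mul (sq_nonneg a)]
        congr 1
        field_simp
      have hab_val : a * b = ((d.choose i : ℝ)) ^ 2 * (p * (1 - p)) ^ d := by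
        show binomPmf d p i * binomPmf d p (d - i) = _
        unfold binomPmf
        rw [Nat.choose_symm hid, Nat.sub_sub_self hid]
        have e1 : p ^ i * p ^ (d - i) = p ^ d := by
          rw [← pow_add, Nat.add_sub_cancel' hid]
        have e2 : (1 - p) ^ (d - i) * (1 - p) ^ i = (1 - p) ^ d := by
          rw [← pow_add, Nat.sub_add_cancel hid]
        calc (d.choose i : ℝ) * p ^ i * (1-p) ^ (d-i) * ((d.choose i : ℝ) * p ^ (d-i) * (1-p) ^ i)
            = (d.choose i : ℝ)^2 * (p ^ i * p ^ (d-i)) * ((1-p) ^ (d-i) * (1-p) ^ i) := by ring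
          _ = (d.choose i : ℝ)^2 * p ^ d * (1-p)^d := by rw [e1, e2]
          _ = (d.choose i : ℝ)^2 * (p * (1-p))^d := by rw [mul_pow]; ring
      have hsqrt : Real.sqrt (a * b) = (d.choose i : ℝ) * (Real.sqrt (p * (1 - p))) ^ d := by
        rw [hab_val, Real.sqrt_mul (by positivity), Real.sqrt_sq (by positivity),
          aux_sqrt_pow _ (by positivity)]
      calc a * (Real.log (1 + b / a) / Real.log 2)
          ≤ a * (2 * Real.sqrt (b / a) / Real.log 2) := by
            gcongr
        _ = (2 / Real.log 2) * (a * Real.sqrt (b / a)) := by ring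
        _ = (2 / Real.log 2) * Real.sqrt (a * b) := by rw [hsab]
        _ = (2 / Real.log 2) * ((d.choose i : ℝ) * (Real.sqrt (p * (1 - p))) ^ d) := by rw [hsqrt]
    calc ‖∑ i ∈ Finset.range (d + 1), binomPmf d p i *
          Real.logb 2 (binomPmf d p i / (binomPmf d p i + binomPmf d p (d - i)))‖
        ≤ ∑ i ∈ Finset.range (d + 1),
          ‖binomPmf d p i * Real.logb 2 (binomPmf d p i / (binomPmf d p i + binomPmf d p (d - i)))‖ :=
          norm_sum_le _ _
      _ ≤ ∑ i ∈ Finset.range (d + 1),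
          (2 / Real.log 2) * ((d.choose i : ℝ) * (Real.sqrt (p * (1 - p))) ^ d) :=
          Finset.sum_le_sum termbound
      _ = (2 / Real.log 2) * ((Real.sqrt (p * (1 - p))) ^ d *
            ∑ i ∈ Finset.range (d + 1), (d.choose i : ℝ)) := by
          rw [Finset.mul_sum, Finset.mul_sum]; congr 1; ext i; ring
      _ = (2 / Real.log 2) * q ^ d := by
          have : ∑ i ∈ Finset.range (d + 1), (d.choose i : ℝ) = 2 ^ d := by
            rw [← Nat.cast_sum]
            norm_cast
            exact Nat.sum_range_choose d
          rw [this, hq, mul_pow]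
          ring
  have hS : Filter.Tendsto (fun d : ℕ => ∑ i ∈ Finset.range (d + 1),
      binomPmf d p i * Real.logb 2 (binomPmf d p i / (binomPmf d p i + binomPmf d p (d - i))))
      Filter.atTop (nhds 0) := by
    apply squeeze_zero_norm key
    have := (tendsto_pow_atTop_nhds_zero_of_lt_one hq0 hq1).const_mul (2 / Real.log 2)
    simpa using this
  have : Filter.Tendsto (fun d : ℕ => multiDrawCapacity p d) Filter.atTop (nhds (1 + 0)) := by
    unfold multiDrawCapacity
    exact hS.const_add 1
  simpa using this
end
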